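/- arXiv:1811.01364 — 4 statements merged into one kernel-verified Lean document; each statement's English description precedes it below -/
import Mathlib

section
/- Let $T>0$, let $y\colon [0,T]\to [0,\infty)$ be continuous, $a\colon [0,T]\to[0,\infty)$ integrable, and $y_0\in\mathbb{R}$ satisfy $y_0\int_0^T a(\tau)\,d\tau < 1$ and $y(t) \le y_0 \exp\big(\int_0^t a(\tau)y(\tau)\,d\tau\big)$ for every $t\in[0,T]$. Then for every $t\in[0,T]$ one has $y(t) \le \dfrac{y_0}{1-y_0\int_0^t a(\tau)\,d\tau}$. -/
open MeasureTheory Set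

/-- Nonlinear Grönwall lemma (Lemma 4.4 of the paper). -/
theorem stmt_0 (T : ℝ) (hT : 0 < T) (y a : ℝ → ℝ)
    (hy : ContinuousOn y (Icc 0 T))
    (hynn : ∀ t ∈ Icc (0:ℝ) T, 0 ≤ y t)
    (ha : IntervalIntegrable a volume 0 T)
    (hann : ∀ t ∈ Icc (0:ℝ) T, 0 ≤ a t)
    (y0 : ℝ)
    (hsmall : y0 * ∫ τ in (0:ℝ)..T, a τ < 1)
    (hbound : ∀ t ∈ Icc (0:ℝ) T,
      y t ≤ y0 * Real.exp (∫ τ in (0:ℝ)..t, a τ * y τ)) :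
    ∀ t ∈ Icc (0:ℝ) T, y t ≤ y0 / (1 - y0 * ∫ τ in (0:ℝ)..t, a τ) := by
  have huIcc : uIcc (0:ℝ) T = Icc 0 T := uIcc_of_le hT.le
  set A : ℝ → ℝ := fun t => ∫ τ in (0:ℝ)..t, a τ with hAdef
  set F : ℝ → ℝ := fun t => ∫ τ in (0:ℝ)..t, a τ * y τ with hFdef
  -- basic integrability
  have hay_int : IntervalIntegrable (fun τ => a τ * y τ) volume 0 T :=
    ha.mul_continuousOn (huIcc ▸ hy)
  have ha_sub : ∀ s t : ℝ, s ∈ Icc 0 T → t ∈ Icc 0 T →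
      IntervalIntegrable a volume s t := fun s t hs ht =>
    ha.mono_set (by rw [huIcc]; exact uIcc_subset_Icc hs ht)
  have hay_sub : ∀ s t : ℝ, s ∈ Icc 0 T → t ∈ Icc 0 T →
      IntervalIntegrable (fun τ => a τ * y τ) volume s t := fun s t hs ht =>
    hay_int.mono_set (by rw [huIcc]; exact uIcc_subset_Icc hs ht)
  -- continuity of primitives
  have hAcont : ContinuousOn A (Icc 0 T) := by
    have := intervalIntegral.continuousOn_primitive_interval' ha
      (by rw [huIcc]; exact ⟨le_refl 0, hT.le⟩)
    rwa [huIcc] at this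
  have hFcont : ContinuousOn F (Icc 0 T) := by
    have := intervalIntegral.continuousOn_primitive_interval' hay_int
      (by rw [huIcc]; exact ⟨le_refl 0, hT.le⟩)
    rwa [huIcc] at this
  have hA0 : A 0 = 0 := intervalIntegral.integral_same
  have hF0 : F 0 = 0 := intervalIntegral.integral_same
  -- increments
  have hAsub : ∀ s t : ℝ, s ∈ Icc 0 T → t ∈ Icc 0 T →
      A t - A s = ∫ τ in s..t, a τ := fun s t hs ht =>
    intervalIntegral.integral_interval_sub_left (ha_sub 0 t ⟨le_refl 0, hT.le⟩ ht)
      (ha_sub 0 s ⟨le_refl 0, hT.le⟩ hs)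
  have hFsub : ∀ s t : ℝ, s ∈ Icc 0 T → t ∈ Icc 0 T →
      F t - F s = ∫ τ in s..t, a τ * y τ := fun s t hs ht =>
    intervalIntegral.integral_interval_sub_left (hay_sub 0 t ⟨le_refl 0, hT.le⟩ ht)
      (hay_sub 0 s ⟨le_refl 0, hT.le⟩ hs)
  -- monotonicity of A
  have hAmono : ∀ s t : ℝ, s ∈ Icc 0 T → t ∈ Icc 0 T → s ≤ t → A s ≤ A t := by
    intro s t hs ht hst
    have : 0 ≤ A t - A s := by
      rw [hAsub s t hs ht]
      apply intervalIntegral.integral_nonneg hst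
      intro u hu
      exact hann u ⟨hs.1.trans hu.1, hu.2.trans ht.2⟩
    linarith
  have hAnn : ∀ t ∈ Icc (0:ℝ) T, 0 ≤ A t := fun t ht => by
    have := hAmono 0 t ⟨le_refl 0, hT.le⟩ ht ht.1; rwa [hA0] at this
  have hATnn : 0 ≤ A T := hAnn T ⟨hT.le, le_refl T⟩
  -- dispatch non-positive y0
  rcases lt_trichotomy y0 0 with hy0 | hy0 | hy0
  · intro t ht
    exfalso
    have h1 := hbound t ht
    have h2 := hynn t ht
    have h3 := Real.exp_pos (∫ τ in (0:ℝ)..t, a τ * y τ)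
    nlinarith
  · intro t ht
    have h1 := hbound t ht
    rw [hy0] at h1 ⊢
    simpa using h1
  -- main case: y0 > 0
  -- key lemma: for any c > y0 with c * A T < 1, F t ≤ -log (1 - c * A t)
  have key : ∀ c : ℝ, y0 < c → c * A T < 1 →
      ∀ t ∈ Icc (0:ℝ) T, F t ≤ -Real.log (1 - c * A t) := by
    intro c hc1 hc2
    have hcpos : 0 < c := hy0.trans hc1
    have hu : ∀ t ∈ Icc (0:ℝ) T, 0 < 1 - c * A t := by
      intro t ht
      have : c * A t ≤ c * A T :=
        mul_le_mul_of_nonneg_left (hAmono t T ht ⟨hT.le, le_refl T⟩ ht.2) hcpos.le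
      linarith
    set Φ : ℝ → ℝ := fun s => -Real.log (1 - c * A s) with hΦdef
    have hΦcont : ContinuousOn Φ (Icc 0 T) := by
      apply ContinuousOn.neg
      apply ContinuousOn.log
      · exact continuousOn_const.sub (continuousOn_const.mul hAcont)
      · intro t ht; exact (hu t ht).ne'
    have hΦ0 : Φ 0 = 0 := by simp [hΦdef, hA0]
    set E : Set ℝ := {t | t ∈ Icc (0:ℝ) T ∧ ∀ s ∈ Icc (0:ℝ) t, F s ≤ Φ s} with hEdef
    have h0E : (0:ℝ) ∈ E := by
      refine ⟨⟨le_refl 0, hT.le⟩, ?_⟩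
      intro s hs
      have : s = 0 := le_antisymm hs.2 hs.1
      rw [this, hF0, hΦ0]
    have hbdd : BddAbove E := ⟨T, fun x hx => hx.1.2⟩
    have hne : E.Nonempty := ⟨0, h0E⟩
    set t₀ : ℝ := sSup E with ht₀def
    have ht₀0 : 0 ≤ t₀ := le_csSup hbdd h0E
    have ht₀T : t₀ ≤ T := csSup_le hne fun x hx => hx.1.2
    have ht₀mem : t₀ ∈ Icc (0:ℝ) T := ⟨ht₀0, ht₀T⟩
    -- every point strictly below t₀ satisfies the inequality
    have hlt : ∀ s : ℝ, 0 ≤ s → s < t₀ → F s ≤ Φ s := by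
      intro s hs0 hst
      obtain ⟨e, heE, hse⟩ := exists_lt_of_lt_csSup hne hst
      exact heE.2 s ⟨hs0, hse.le⟩
    -- t₀ itself satisfies the inequality
    have hstar : F t₀ ≤ Φ t₀ := by
      rcases eq_or_lt_of_le ht₀0 with h0 | h0
      · rw [← h0, hF0, hΦ0]
      have hsubset : Ico (0:ℝ) t₀ ⊆ Icc 0 T := fun x hx => ⟨hx.1, hx.2.le.trans ht₀T⟩
      have hnb : (nhdsWithin t₀ (Ico (0:ℝ) t₀)).NeBot := by
        rw [← mem_closure_iff_nhdsWithin_neBot, closure_Ico h0.ne]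
        exact ⟨ht₀0, le_refl t₀⟩
      have htend : Filter.Tendsto (fun x => F x - Φ x) (nhdsWithin t₀ (Ico 0 t₀))
          (nhds (F t₀ - Φ t₀)) := ((hFcont.sub hΦcont) t₀ ht₀mem).mono hsubset
      have hev : ∀ᶠ x in nhdsWithin t₀ (Ico (0:ℝ) t₀), F x - Φ x ≤ 0 := by
        filter_upwards [self_mem_nhdsWithin] with x hx
        have := hlt x hx.1 hx.2
        linarith
      have := le_of_tendsto htend hev
      linarith
    have ht₀E : t₀ ∈ E := by
      refine ⟨ht₀mem, ?_⟩
      intro s hs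
      rcases lt_or_eq_of_le hs.2 with h | h
      · exact hlt s hs.1 h
      · rw [h]; exact hstar
    -- show t₀ = T by contradiction
    rcases eq_or_lt_of_le ht₀T with hTeq | hTlt
    · intro t ht
      exact ht₀E.2 t ⟨ht.1, ht.2.trans_eq hTeq.symm⟩
    · exfalso
      set δ : ℝ := Real.log (c / y0) with hδdef
      have hδpos : 0 < δ := Real.log_pos ((one_lt_div hy0).mpr hc1)
      -- continuity of F at t₀ gives a right neighborhood where F < F t₀ + δ
      have hFt : Filter.Tendsto F (nhdsWithin t₀ (Icc 0 T)) (nhds (F t₀)) :=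
        hFcont t₀ ht₀mem
      have hev : ∀ᶠ x in nhdsWithin t₀ (Icc (0:ℝ) T), F x < F t₀ + δ :=
        hFt (Iio_mem_nhds (lt_add_of_pos_right _ hδpos))
      rw [eventually_nhdsWithin_iff, Metric.eventually_nhds_iff] at hev
      obtain ⟨ε, hεpos, hball⟩ := hev
      set b : ℝ := min (t₀ + ε / 2) T with hbdef
      have ht₀b : t₀ < b := lt_min (by linarith) hTlt
      have hbT : b ≤ T := min_le_right _ _
      have hbmem : b ∈ Icc (0:ℝ) T := ⟨ht₀0.trans ht₀b.le, hbT⟩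
      -- F x ≤ F t₀ + δ for all x in [t₀, b]
      have hFδ : ∀ x ∈ Icc t₀ b, F x ≤ F t₀ + δ := by
        intro x hx
        have hx1 : x ∈ Icc (0:ℝ) T := ⟨ht₀0.trans hx.1, hx.2.trans hbT⟩
        have hx2 : dist x t₀ < ε := by
          rw [Real.dist_eq, abs_of_nonneg (by linarith [hx.1])]
          have : x ≤ t₀ + ε / 2 := hx.2.trans (min_le_left _ _)
          linarith
        exact (hball hx2 hx1).le
      -- b ∈ E
      have hbE : b ∈ E := by
        refine ⟨hbmem, ?_⟩
        intro s hs
        rcases le_or_gt s t₀ with h | h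
        · exact ht₀E.2 s ⟨hs.1, h⟩
        · -- t₀ < s ≤ b
          have hsmem : s ∈ Icc (0:ℝ) T := ⟨hs.1, hs.2.trans hbT⟩
          set C : ℝ := c / (1 - c * A t₀) with hCdef
          have hu₀ : 0 < 1 - c * A t₀ := hu t₀ ht₀mem
          have hus : 0 < 1 - c * A s := hu s hsmem
          -- pointwise bound on [t₀, s]
          have hpw : ∀ σ ∈ Icc t₀ s, a σ * y σ ≤ a σ * C := by
            intro σ hσ
            have hσmem : σ ∈ Icc (0:ℝ) T := ⟨ht₀0.trans hσ.1, hσ.2.trans hsmem.2⟩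
            have h1 : y σ ≤ y0 * Real.exp (F σ) := hbound σ hσmem
            have h2 : F σ ≤ F t₀ + δ := hFδ σ ⟨hσ.1, hσ.2.trans hs.2⟩
            have h3 : F t₀ ≤ Φ t₀ := ht₀E.2 t₀ ⟨ht₀0, le_refl t₀⟩
            have h4 : y0 * Real.exp (F σ) ≤ y0 * Real.exp (Φ t₀ + δ) := by
              apply mul_le_mul_of_nonneg_left _ hy0.le
              exact Real.exp_le_exp.mpr (by linarith)
            have h5 : y0 * Real.exp (Φ t₀ + δ) = C := by
              rw [Real.exp_add, hδdef, Real.exp_log (div_pos hcpos hy0), hΦdef]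
              rw [Real.exp_neg, Real.exp_log hu₀, hCdef]
              rw [eq_div_iff hu₀.ne']
              field_simp
            have h6 : y σ ≤ C := h1.trans (h4.trans_eq h5)
            exact mul_le_mul_of_nonneg_left h6 (hann σ hσmem)
          -- integral comparison
          have hint1 : IntervalIntegrable (fun τ => a τ * y τ) volume t₀ s :=
            hay_sub t₀ s ht₀mem hsmem
          have hint2 : IntervalIntegrable (fun τ => a τ * C) volume t₀ s :=
            (ha_sub t₀ s ht₀mem hsmem).mul_const C
          have hcomp : (∫ τ in t₀..s, a τ * y τ) ≤ ∫ τ in t₀..s, a τ * C :=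
            intervalIntegral.integral_mono_on h.le hint1 hint2 hpw
          have hre : (∫ τ in t₀..s, a τ * C) = C * (A s - A t₀) := by
            rw [intervalIntegral.integral_mul_const, hAsub t₀ s ht₀mem hsmem]
            ring
          have hFs : F s - F t₀ ≤ C * (A s - A t₀) := by
            rw [hFsub t₀ s ht₀mem hsmem]
            exact hcomp.trans_eq hre
          -- log inequality step
          have hlog : C * (A s - A t₀) ≤ Φ s - Φ t₀ := by
            have hz : (0:ℝ) < (1 - c * A s) / (1 - c * A t₀) := div_pos hus hu₀
            have := Real.log_le_sub_one_of_pos hz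
            rw [Real.log_div hus.ne' hu₀.ne'] at this
            have hC : C * (A s - A t₀) = 1 - (1 - c * A s) / (1 - c * A t₀) := by
              rw [hCdef]; field_simp; ring
            rw [hC, hΦdef]
            have : Real.log (1 - c * A s) - Real.log (1 - c * A t₀) ≤
                (1 - c * A s) / (1 - c * A t₀) - 1 := this
            linarith
          have h3 : F t₀ ≤ Φ t₀ := ht₀E.2 t₀ ⟨ht₀0, le_refl t₀⟩
          linarith
      have : b ≤ t₀ := le_csSup hbdd hbE
      linarith
  -- conclude by letting c → y0 from above
  intro t ht
  have hyF : y t ≤ y0 * Real.exp (F t) := hbound t ht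
  have hAt : A t ≤ A T := hAmono t T ht ⟨hT.le, le_refl T⟩ ht.2
  have hAtnn : 0 ≤ A t := hAnn t ht
  have hden : 0 < 1 - y0 * A t := by nlinarith
  -- for each admissible c, bound y t
  have hc_bound : ∀ c : ℝ, y0 < c → c * A T < 1 → y t ≤ y0 / (1 - c * A t) := by
    intro c hc1 hc2
    have hcpos : 0 < c := hy0.trans hc1
    have hus : 0 < 1 - c * A t := by nlinarith
    have h1 : F t ≤ -Real.log (1 - c * A t) := key c hc1 hc2 t ht
    have h2 : Real.exp (F t) ≤ (1 - c * A t)⁻¹ := by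
      rw [← Real.exp_log (inv_pos.mpr hus), Real.log_inv]
      exact Real.exp_le_exp.mpr h1
    calc y t ≤ y0 * Real.exp (F t) := hyF
      _ ≤ y0 * (1 - c * A t)⁻¹ := mul_le_mul_of_nonneg_left h2 hy0.le
      _ = y0 / (1 - c * A t) := by rw [div_eq_mul_inv]
  -- limit as c → y0⁺
  have htend : Filter.Tendsto (fun c : ℝ => y0 / (1 - c * A t)) (nhdsWithin y0 (Ioi y0))
      (nhds (y0 / (1 - y0 * A t))) := by
    apply Filter.Tendsto.mono_left _ nhdsWithin_le_nhds
    exact (tendsto_const_nhds.div ((tendsto_const_nhds.sub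
      ((continuous_id.mul continuous_const).tendsto y0))) hden.ne')
  have hev : ∀ᶠ c in nhdsWithin y0 (Ioi y0), y t ≤ y0 / (1 - c * A t) := by
    have h1 : ∀ᶠ c in nhds y0, c * A T < 1 := by
      have : Filter.Tendsto (fun c : ℝ => c * A T) (nhds y0) (nhds (y0 * A T)) :=
        (continuous_id.mul continuous_const).tendsto y0
      exact this (Iio_mem_nhds hsmall)
    filter_upwards [nhdsWithin_le_nhds h1, self_mem_nhdsWithin] with c hc1 hc2
    exact hc_bound c hc2 hc1
  exact ge_of_tendsto htend hev
end

section
/- For every real number $a \ge 0$, the function $z \mapsto \big(e + \tfrac{a}{z}\big)^{z}$ is monotone increasing on $(0,\infty)$. -/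
/-!
Writing `(e + a/z)^z = exp (z * log (e + a/z))`, it suffices that `z ↦ z * f (a / z)` is
increasing for `f u = log (e + u)`. For `a > 0` this is `a * (f u / u)` at `u = a / z`, which
decreases in `z`; and `u ↦ f u / u` is decreasing for any concave `f` on `[0, ∞)` with
`f 0 ≥ 0`, being the sum of the secant slope `(f u - f 0) / u` and `f 0 / u`.
-/

open Set Real

theorem ConcaveOn.antitoneOn_div_self {𝕜 : Type*} [Field 𝕜] [LinearOrder 𝕜]
    [IsStrictOrderedRing 𝕜] {f : 𝕜 → 𝕜} (hf : ConcaveOn 𝕜 (Ici 0) f) (h0 : 0 ≤ f 0) :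
    AntitoneOn (fun u => f u / u) (Ioi 0) := by
  have hslope : AntitoneOn (slope f 0) (Ioi 0) :=
    (hf.antitoneOn_slope_gt self_mem_Ici).mono fun u hu => ⟨le_of_lt hu, hu⟩
  have hinv : AntitoneOn (fun u : 𝕜 => f 0 / u) (Ioi 0) := fun u hu _ _ huv =>
    div_le_div_of_nonneg_left h0 hu huv
  refine (hslope.add hinv).congr fun u hu => ?_
  simp only [slope_def_field, sub_zero]
  field_simp
  ring

theorem ConcaveOn.monotoneOn_mul_comp_div {f : ℝ → ℝ} (hf : ConcaveOn ℝ (Ici 0) f)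
    (h0 : 0 ≤ f 0) {a : ℝ} (ha : 0 ≤ a) :
    MonotoneOn (fun z => z * f (a / z)) (Ioi 0) := by
  rcases ha.eq_or_lt with rfl | ha
  · exact fun x _ y _ hxy => by simpa only [zero_div] using mul_le_mul_of_nonneg_right hxy h0
  intro x (hx : 0 < x) y (hy : 0 < y) hxy
  have hratio : f (a / x) / (a / x) ≤ f (a / y) / (a / y) :=
    hf.antitoneOn_div_self h0 (div_pos ha hy) (div_pos ha hx)
      (div_le_div_of_nonneg_left ha.le hx hxy)
  have hrw : ∀ z, 0 < z → z * f (a / z) = a * (f (a / z) / (a / z)) := fun z hz => by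
    field_simp
  show x * f (a / x) ≤ y * f (a / y)
  rw [hrw x hx, hrw y hy]
  exact mul_le_mul_of_nonneg_left hratio ha.le

theorem concaveOn_log_const_add {c : ℝ} (hc : 0 < c) :
    ConcaveOn ℝ (Ici 0) fun u => log (c + u) :=
  (strictConcaveOn_log_Ioi.concaveOn.translate_right c).subset
    (fun u (hu : 0 ≤ u) => show 0 < c + u by linarith) (convex_Ici 0)

/-- For `a ≥ 0`, the function `z ↦ (e + a / z) ^ z` is increasing on `(0, ∞)`. -/
theorem stmt_2 (a : ℝ) (ha : 0 ≤ a) :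
    MonotoneOn (fun z : ℝ => (Real.exp 1 + a / z) ^ z) (Set.Ioi 0) := by
  have hexponent : MonotoneOn (fun z => z * log (exp 1 + a / z)) (Ioi 0) :=
    (concaveOn_log_const_add (exp_pos 1)).monotoneOn_mul_comp_div (by simp) ha
  refine (exp_monotone.comp_monotoneOn hexponent).congr fun z (hz : 0 < z) => ?_
  simp only [Function.comp_apply]
  rw [rpow_def_of_pos (by positivity), mul_comm]
end

section
/- Let $G \colon [0,\infty) \to [0,\infty)$ be continuous and non-decreasing with $G(0) = G_0$, and suppose there exist constants $C_0, C_1 > 0$, $\mathcal{E}_0 \ge 0$, $c > 0$ such that for every $t \ge 0$ with $G(t) + G(t)^2 \le \tfrac{C_0}{2}$, one has \[ G(t) \le G_0 \exp\Big( C_1\big( c(\mathcal{E}_0^{1/2}+\mathcal{E}_0) + \mathcal{E}_0 + \tfrac{(c(\mathcal{E}_0^{1/2}+\mathcal{E}_0) + G(t))G(t) + \mathcal{E}_0 G(t)^2}{C_0 - G(t) - G(t)^2} \big)\Big). \] If moreover \[ G_0\,\exp\big(2C_1(c(\mathcal{E}_0^{1/2}+\mathcal{E}_0)+\mathcal{E}_0)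 + \tfrac{C_0 C_1}{2}\big) < \frac{\sqrt{1+2C_0}-1}{2}, \] then $G(t) < \frac{\sqrt{1+2C_0}-1}{2}$ for all $t \ge 0$ (in particular $G(t)+G(t)^2 < \frac{C_0}{2}$ for all $t$). -/
open Real

/-- The bootstrap (continuous induction) argument concluding the proof of
Theorem 1.1 in the case `s = 1/2` (Section 6). -/
theorem stmt_15 (G : ℝ → ℝ) (G₀ C₀ C₁ 𝓔₀ c : ℝ)
    (hGcont : ContinuousOn G (Set.Ici 0))
    (hGmono : MonotoneOn G (Set.Ici 0))
    (hGnn : ∀ t, 0 ≤ t → 0 ≤ G t)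
    (hG0 : G 0 = G₀)
    (hC₀ : 0 < C₀) (hC₁ : 0 < C₁) (h𝓔₀ : 0 ≤ 𝓔₀) (hc : 0 < c)
    (hyp : ∀ t, 0 ≤ t → G t + (G t) ^ 2 ≤ C₀ / 2 →
      G t ≤ G₀ * Real.exp (C₁ * (c * (Real.sqrt 𝓔₀ + 𝓔₀) + 𝓔₀ +
        ((c * (Real.sqrt 𝓔₀ + 𝓔₀) + G t) * G t + 𝓔₀ * (G t) ^ 2) /
          (C₀ - G t - (G t) ^ 2))))
    (hsmall : G₀ * Real.exp (2 * C₁ * (c * (Real.sqrt 𝓔₀ + 𝓔₀) + 𝓔₀) + C₀ * C₁ / 2)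
        < (Real.sqrt (1 + 2 * C₀) - 1) / 2) :
    ∀ t, 0 ≤ t → G t < (Real.sqrt (1 + 2 * C₀) - 1) / 2 := by
  intro t ht
  set g : ℝ := (Real.sqrt (1 + 2 * C₀) - 1) / 2 with hg
  have hs : Real.sqrt (1 + 2 * C₀) ^ 2 = 1 + 2 * C₀ := Real.sq_sqrt (by linarith)
  have hsnn : 0 ≤ Real.sqrt (1 + 2 * C₀) := Real.sqrt_nonneg _
  have hgpos : 0 < g := by
    have h1 : 1 < Real.sqrt (1 + 2 * C₀) := by nlinarith
    rw [hg]; linarith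
  have hgeq : g + g ^ 2 = C₀ / 2 := by rw [hg]; nlinarith
  by_contra hcon
  push_neg at hcon
  have hanneg : 0 ≤ c * (Real.sqrt 𝓔₀ + 𝓔₀) := by positivity
  have hG0nn : 0 ≤ G₀ := hG0 ▸ hGnn 0 le_rfl
  have hexp1 : (1:ℝ) ≤ Real.exp (2 * C₁ * (c * (Real.sqrt 𝓔₀ + 𝓔₀) + 𝓔₀) + C₀ * C₁ / 2) := by
    apply Real.one_le_exp; positivity
  have hG0g : G 0 ≤ g := by
    rw [hG0]
    nlinarith [hsmall]
  obtain ⟨t₀, ht₀, hGt₀⟩ := intermediate_value_Icc ht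
    (hGcont.mono (Set.Icc_subset_Ici_self)) ⟨hG0g, hcon⟩
  have ht₀0 : (0:ℝ) ≤ t₀ := ht₀.1
  have hsum : G t₀ + (G t₀) ^ 2 ≤ C₀ / 2 := by rw [hGt₀]; linarith
  have hkey := hyp t₀ ht₀0 hsum
  rw [hGt₀] at hkey
  have hden : C₀ - g - g ^ 2 = C₀ / 2 := by linarith
  rw [hden] at hkey
  set a : ℝ := c * (Real.sqrt 𝓔₀ + 𝓔₀) with ha
  have hX : ((a + g) * g + 𝓔₀ * g ^ 2) / (C₀ / 2) ≤ a + 𝓔₀ + C₀ / 2 := by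
    rw [div_le_iff₀ (by positivity)]
    nlinarith [mul_nonneg hanneg (sq_nonneg g), mul_nonneg h𝓔₀ hgpos.le,
      mul_nonneg (sq_nonneg g) hgpos.le, pow_le_pow_left₀ hgpos.le (le_refl g) 2,
      sq_nonneg (g ^ 2)]
  have hE : C₁ * (a + 𝓔₀ + ((a + g) * g + 𝓔₀ * g ^ 2) / (C₀ / 2))
      ≤ 2 * C₁ * (a + 𝓔₀) + C₀ * C₁ / 2 := by nlinarith
  have hfin : g ≤ G₀ * Real.exp (2 * C₁ * (a + 𝓔₀) + C₀ * C₁ / 2) :=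
    le_trans hkey (mul_le_mul_of_nonneg_left (Real.exp_le_exp.mpr hE) hG0nn)
  linarith
end

section
/- Let $F\colon [0,\infty)\to[0,\infty)$ be continuous with $F(0) \le F_0$, let $a, b \ge 0$ be constants and $j \in L^2_{loc}([0,\infty))$, and suppose for all $t \ge 0$: \[ F(t) \le F_0 \exp\Big( C\big(a + \int_0^t \|j(\tau)\|^2 F(\tau)\,d\tau \big)\Big) \] for some $C>0$. If $C F_0 e^{Ca} \int_0^t \|j(\tau)\|^2\,d\tau < 1$, then \[ F(t) \le \frac{F_0\, e^{Ca}}{1 - C F_0\,e^{Ca} \int_0^t \|j(\tau)\|^2\,d\tau}. \] -/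
/-!
Write `G s = ∫₀ˢ k y` and `K s = ∫₀ˢ k`, so the hypothesis reads `y ≤ y₀ e^G`. Formally
`(e^{-G})' = -k y e^{-G} ≥ -y₀ k`, hence `e^{-G} + y₀ K` is nondecreasing, `e^{-G t} ≥ 1 - y₀ K t`,
and `y t ≤ y₀ e^{G t} ≤ y₀ / (1 - y₀ K t)`. Since `G` is only absolutely continuous, we argue
without derivatives: for `c > y₀`, continuity of `G` gives `y ≤ c e^{G x}` just to the right of `x`,
which together with the tangent-line bound for `e^{-u}` makes the continuous function
`e^{-G} + c K` nondecreasing to the right of every point, hence nondecreasing by real induction;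
finally let `c → y₀`.
-/

open MeasureTheory Set Filter Topology Real

theorem le_of_forall_eventually_nhdsGT_le {α β : Type*} [ConditionallyCompleteLinearOrder α]
    [TopologicalSpace α] [OrderTopology α] [DenselyOrdered α] [LinearOrder β]
    [TopologicalSpace β] [OrderClosedTopology β] {Φ : α → β} {a b : α} (hab : a ≤ b)
    (hΦ : ContinuousOn Φ (Icc a b)) (hloc : ∀ x ∈ Ico a b, ∀ᶠ z in 𝓝[>] x, Φ x ≤ Φ z) :
    Φ a ≤ Φ b := by
  have hclosed : IsClosed ({x | Φ a ≤ Φ x} ∩ Icc a b) := by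
    rw [inter_comm]
    exact hΦ.preimage_isClosed_of_isClosed isClosed_Icc isClosed_Ici
  refine hclosed.Icc_subset_of_forall_mem_nhdsWithin le_rfl (fun x hx => ?_) (right_mem_Icc.2 hab)
  exact (hloc x hx.2).mono fun z hz => hx.1.trans hz

theorem Real.exp_neg_sub_exp_neg_le (x y : ℝ) : exp (-x) - exp (-y) ≤ exp (-x) * (y - x) := by
  have h : exp (-y) = exp (-x) * exp (-(y - x)) := by rw [← exp_add]; ring_nf
  nlinarith [add_one_le_exp (-(y - x)), exp_pos (-x)]

section NonlinearGronwall

variable {k y : ℝ → ℝ} {y₀ t : ℝ}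

theorem eventually_exp_neg_integral_add_mul_integral_le
    (hk : ∀ s ∈ Icc 0 t, 0 ≤ k s) (hk_int : IntervalIntegrable k volume 0 t)
    (hky : IntervalIntegrable (fun s => k s * y s) volume 0 t)
    (hbound : ∀ s ∈ Icc 0 t, y s ≤ y₀ * exp (∫ τ in 0..s, k τ * y τ))
    {c : ℝ} (hc : y₀ < c) {x : ℝ} (hx : x ∈ Ico 0 t) :
    ∀ᶠ z in 𝓝[>] x, exp (-∫ τ in 0..x, k τ * y τ) + c * ∫ τ in 0..x, k τ ≤
      exp (-∫ τ in 0..z, k τ * y τ) + c * ∫ τ in 0..z, k τ := by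
  set G : ℝ → ℝ := fun s => ∫ τ in 0..s, k τ * y τ
  set K : ℝ → ℝ := fun s => ∫ τ in 0..s, k τ
  have hIcc : ∀ {p q}, p ∈ Icc 0 t → q ∈ Icc 0 t → uIcc p q ⊆ uIcc 0 t := fun hp hq =>
    uIcc_subset_uIcc (Icc_subset_uIcc hp) (Icc_subset_uIcc hq)
  have hnhds : Icc 0 t ∈ 𝓝[≥] x :=
    mem_of_superset (Icc_mem_nhdsGE hx.2) (Icc_subset_Icc_left hx.1)
  have hG : ContinuousWithinAt G (Ici x) x := by
    have := intervalIntegral.continuousOn_primitive_interval' hky left_mem_uIcc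
    rw [uIcc_of_le (hx.1.trans hx.2.le)] at this
    exact (this x (Ico_subset_Icc_self hx)).mono_of_mem_nhdsWithin hnhds
  have hcap : ∀ᶠ τ in 𝓝[≥] x, τ ∈ Icc 0 t ∧ y₀ * exp (G τ) < c * exp (G x) :=
    Filter.Eventually.and hnhds <| Tendsto.eventually_lt_const
      ((mul_lt_mul_iff_left₀ (exp_pos _)).2 hc)
      ((continuous_exp.continuousAt.comp_continuousWithinAt hG).const_mul y₀).tendsto
  obtain ⟨u, hxu, hu⟩ := mem_nhdsGE_iff_exists_Ico_subset.1 hcap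
  filter_upwards [Ioo_mem_nhdsGT hxu] with z hz
  have hxz : Icc x z ⊆ Ico x u := Icc_subset_Ico_right hz.2
  have h0 : (0 : ℝ) ∈ Icc 0 t := left_mem_Icc.2 (hx.1.trans hx.2.le)
  have hx' : x ∈ Icc 0 t := (hu (hxz (left_mem_Icc.2 hz.1.le))).1
  have hz' : z ∈ Icc 0 t := (hu (hxz (right_mem_Icc.2 hz.1.le))).1
  have hGK : G z - G x ≤ c * exp (G x) * (K z - K x) := by
    rw [intervalIntegral.integral_interval_sub_left (hky.mono_set (hIcc h0 hz'))
        (hky.mono_set (hIcc h0 hx')),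
      intervalIntegral.integral_interval_sub_left (hk_int.mono_set (hIcc h0 hz'))
        (hk_int.mono_set (hIcc h0 hx')), ← intervalIntegral.integral_const_mul]
    refine intervalIntegral.integral_mono_on hz.1.le (hky.mono_set (hIcc hx' hz'))
      ((hk_int.mono_set (hIcc hx' hz')).const_mul _) fun τ hτ => ?_
    obtain ⟨hτt, hτc⟩ := hu (hxz hτ)
    rw [mul_comm]
    exact mul_le_mul_of_nonneg_right ((hbound τ hτt).trans hτc.le) (hk τ hτt)
  calc exp (-G x) + c * K x
      ≤ exp (-G z) + exp (-G x) * (G z - G x) + c * K x := by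
        linarith [Real.exp_neg_sub_exp_neg_le (G x) (G z)]
    _ ≤ exp (-G z) + exp (-G x) * (c * exp (G x) * (K z - K x)) + c * K x := by
        gcongr
    _ = exp (-G z) + c * K z := by
        have : exp (-G x) * exp (G x) = 1 := by rw [← exp_add, neg_add_cancel, exp_zero]
        linear_combination c * (K z - K x) * this

theorem one_sub_mul_integral_le_exp_neg_integral (ht : 0 ≤ t)
    (hk : ∀ s ∈ Icc 0 t, 0 ≤ k s) (hk_int : IntervalIntegrable k volume 0 t)
    (hky : IntervalIntegrable (fun s => k s * y s) volume 0 t)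
    (hbound : ∀ s ∈ Icc 0 t, y s ≤ y₀ * exp (∫ τ in 0..s, k τ * y τ)) :
    1 - y₀ * ∫ τ in 0..t, k τ ≤ exp (-∫ τ in 0..t, k τ * y τ) := by
  have hprim : ∀ {f : ℝ → ℝ}, IntervalIntegrable f volume 0 t →
      ContinuousOn (fun s => ∫ τ in 0..s, f τ) (Icc 0 t) := fun hf => by
    simpa only [uIcc_of_le ht] using
      intervalIntegral.continuousOn_primitive_interval' hf left_mem_uIcc
  have hone : ∀ c, y₀ < c → 1 ≤ exp (-∫ τ in 0..t, k τ * y τ) + c * ∫ τ in 0..t, k τ := by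
    intro c hc
    have := le_of_forall_eventually_nhdsGT_le ht
      (((hprim hky).neg.rexp).add ((hprim hk_int).const_smul c))
      fun x hx => eventually_exp_neg_integral_add_mul_integral_le hk hk_int hky hbound hc hx
    simpa using this
  have hlim : Tendsto (fun c => exp (-∫ τ in 0..t, k τ * y τ) + c * ∫ τ in 0..t, k τ)
      (𝓝[>] y₀) (𝓝 (exp (-∫ τ in 0..t, k τ * y τ) + y₀ * ∫ τ in 0..t, k τ)) :=
    (Continuous.tendsto (by fun_prop) y₀).mono_left nhdsWithin_le_nhds
  linarith [ge_of_tendsto hlim (eventually_mem_nhdsWithin.mono hone)]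

theorem le_div_one_sub_mul_integral_of_le_mul_exp_integral (ht : 0 ≤ t) (hy₀ : 0 ≤ y₀)
    (hk : ∀ s ∈ Icc 0 t, 0 ≤ k s) (hk_int : IntervalIntegrable k volume 0 t)
    (hky : IntervalIntegrable (fun s => k s * y s) volume 0 t)
    (hbound : ∀ s ∈ Icc 0 t, y s ≤ y₀ * exp (∫ τ in 0..s, k τ * y τ))
    (hsmall : y₀ * ∫ τ in 0..t, k τ < 1) :
    y t ≤ y₀ / (1 - y₀ * ∫ τ in 0..t, k τ) := by
  have hexp : exp (∫ τ in 0..t, k τ * y τ) ≤ (1 - y₀ * ∫ τ in 0..t, k τ)⁻¹ := by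
    rw [le_inv_comm₀ (exp_pos _) (sub_pos.2 hsmall), ← exp_neg]
    exact one_sub_mul_integral_le_exp_neg_integral ht hk hk_int hky hbound
  calc y t ≤ y₀ * exp (∫ τ in 0..t, k τ * y τ) := hbound t (right_mem_Icc.2 ht)
    _ ≤ y₀ / (1 - y₀ * ∫ τ in 0..t, k τ) := by
      rw [div_eq_mul_inv]
      exact mul_le_mul_of_nonneg_left hexp hy₀

end NonlinearGronwall

theorem stmt_16_general (F j : ℝ → ℝ) (F₀ a C : ℝ)
    (hF₀ : 0 ≤ F₀) (hC : 0 < C)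
    (hj : ∀ t, 0 ≤ t → IntervalIntegrable (fun τ => (j τ) ^ 2) volume 0 t)
    (hjF : ∀ t, 0 ≤ t →
      IntervalIntegrable (fun τ => (j τ) ^ 2 * F τ) volume 0 t)
    (hyp : ∀ t, 0 ≤ t →
      F t ≤ F₀ * Real.exp (C * (a + ∫ τ in (0:ℝ)..t, (j τ) ^ 2 * F τ))) :
    ∀ t, 0 ≤ t →
      C * F₀ * Real.exp (C * a) * (∫ τ in (0:ℝ)..t, (j τ) ^ 2) < 1 →
      F t ≤ F₀ * Real.exp (C * a) /
        (1 - C * F₀ * Real.exp (C * a) * ∫ τ in (0:ℝ)..t, (j τ) ^ 2) := by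
  intro t ht hsmall
  have hK : ∫ τ in 0..t, C * j τ ^ 2 = C * ∫ τ in 0..t, j τ ^ 2 :=
    intervalIntegral.integral_const_mul _ _
  have hG : ∀ s, ∫ τ in 0..s, C * j τ ^ 2 * F τ = C * ∫ τ in 0..s, j τ ^ 2 * F τ := fun s => by
    simp only [mul_assoc, intervalIntegral.integral_const_mul]
  have key := le_div_one_sub_mul_integral_of_le_mul_exp_integral (k := fun τ => C * j τ ^ 2)
    (y := F) (y₀ := F₀ * exp (C * a)) ht (by positivity) (fun _ _ => mul_nonneg hC.le (sq_nonneg _))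
    ((hj t ht).const_mul C) (by simpa only [mul_assoc] using (hjF t ht).const_mul C)
    (fun s hs => by rw [hG, mul_assoc, ← exp_add, ← mul_add]; exact hyp s hs.1)
    (by rwa [hK, ← mul_assoc, mul_comm _ C, ← mul_assoc])
  rwa [hK, ← mul_assoc, mul_comm _ C, ← mul_assoc] at key

/-- Combination of the exponential a priori bound with the nonlinear Grönwall
lemma (Section 4). -/
theorem stmt_16 (F j : ℝ → ℝ) (F₀ a C : ℝ)
    (hFcont : ContinuousOn F (Set.Ici 0))
    (hFnn : ∀ t, 0 ≤ t → 0 ≤ F t)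
    (hF0 : F 0 ≤ F₀) (hF₀ : 0 ≤ F₀) (ha : 0 ≤ a) (hC : 0 < C)
    (hj : ∀ t, 0 ≤ t → IntervalIntegrable (fun τ => (j τ) ^ 2) volume 0 t)
    (hjF : ∀ t, 0 ≤ t →
      IntervalIntegrable (fun τ => (j τ) ^ 2 * F τ) volume 0 t)
    (hyp : ∀ t, 0 ≤ t →
      F t ≤ F₀ * Real.exp (C * (a + ∫ τ in (0:ℝ)..t, (j τ) ^ 2 * F τ))) :
    ∀ t, 0 ≤ t →
      C * F₀ * Real.exp (C * a) * (∫ τ in (0:ℝ)..t, (j τ) ^ 2) < 1 →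
      F t ≤ F₀ * Real.exp (C * a) /
        (1 - C * F₀ * Real.exp (C * a) * ∫ τ in (0:ℝ)..t, (j τ) ^ 2) :=
  stmt_16_general F j F₀ a C hF₀ hC hj hjF hyp
end
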